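/- Let H be a real Hilbert space, λ ∈ ℝ, and let f : H → (-∞,∞] be proper, λ-convex and lower semicontinuous. Let δ > 0 and let γ : [0,δ] → H be absolutely continuous with I_f^δ(γ) < ∞. Then f(γ(0)) < ∞, f(γ(δ)) < ∞, and 2|f(γ(δ)) − f(γ(0))| ≤ I_f^δ(γ). -/

import Mathlib

open Filter Topology MeasureTheory Set
open scoped ENNReal RealInnerProductSpace

noncomputable section

attribute [local instance] Classical.propDecidable

variable {H : Type*} [NormedAddCommGroup H] [InnerProductSpace ℝ H] [CompleteSpace H]

/-- `f : H → (-∞,∞]` is proper: not identically `⊤` (and it never takes the value `⊥`). -/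
def ProperFn (f : H → EReal) : Prop :=
  (∃ x, f x ≠ ⊤) ∧ ∀ x, f x ≠ ⊥

/-- `f` is `λ`-convex: `x ↦ f x - (λ/2)‖x‖²` is convex, expressed via the perturbed
convexity inequality. -/
def LambdaConvex (lam : ℝ) (f : H → EReal) : Prop :=
  ∀ x y : H, ∀ t : ℝ, 0 ≤ t → t ≤ 1 →
    f ((1 - t) • x + t • y)
      ≤ ((1 - t : ℝ) : EReal) * f x + ((t : ℝ) : EReal) * f y
        - ((lam / 2 * (t * (1 - t)) * ‖x - y‖ ^ 2 : ℝ) : EReal)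

/-- The subdifferential of a `λ`-convex function at `x` (contained in the domain of `f`). -/
def subdiff (lam : ℝ) (f : H → EReal) (x : H) : Set H :=
  {p : H | f x ≠ ⊤ ∧
    ∀ y : H, f x + ((⟪p, y - x⟫ + lam / 2 * ‖y - x‖ ^ 2 : ℝ) : EReal) ≤ f y}

/-- `∇f(x)`: the element of minimal norm of `∂f(x)` (junk value `0` if there is none). -/
def gradMin (lam : ℝ) (f : H → EReal) (x : H) : H :=
  if h : ∃ p ∈ subdiff lam f x, ∀ q ∈ subdiff lam f x, ‖p‖ ≤ ‖q‖ then h.choose else 0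

/-- `|∇f|(x) ∈ [0,∞]`, equal to `+∞` when `∂f(x) = ∅` (in particular when `f x = ⊤`). -/
def gradNorm (lam : ℝ) (f : H → EReal) (x : H) : ℝ≥0∞ :=
  if (subdiff lam f x).Nonempty then ENNReal.ofReal ‖gradMin lam f x‖ else ⊤

/-- The resolvent `J_τ(x)`: the minimizer of `y ↦ f y + ‖y-x‖²/(2τ)` (junk `0` if none). -/
def Jres (f : H → EReal) (τ : ℝ) (x : H) : H :=
  if h : ∃ y : H, ∀ z : H,
      f y + ((‖y - x‖ ^ 2 / (2 * τ) : ℝ) : EReal)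
        ≤ f z + ((‖z - x‖ ^ 2 / (2 * τ) : ℝ) : EReal)
  then h.choose else 0

/-- The Moreau–Yosida regularization `f_τ(x) = min_y (f y + ‖y-x‖²/(2τ))`. -/
def moreau (f : H → EReal) (τ : ℝ) (x : H) : ℝ :=
  (f (Jres f τ x)).toReal + ‖Jres f τ x - x‖ ^ 2 / (2 * τ)

/-- `γ` is absolutely continuous on `[a,b]` with an integrable derivative. -/
abbrev IsACCurve (a b : ℝ) (γ : ℝ → H) : Prop :=
  ∃ g : ℝ → H, IntegrableOn g (Icc a b) ∧ ∀ t ∈ Icc a b, γ t = γ a + ∫ s in a..t, g s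

/-- The action `I_f^{[a,b]}(γ) = ∫_a^b (‖γ̇‖² + |∇f|²(γ)) dt ∈ [0,∞]`, set to `+∞` when `γ`
is not absolutely continuous. -/
def actionFn (lam : ℝ) (f : H → EReal) (a b : ℝ) (γ : ℝ → H) : ℝ≥0∞ :=
  if h : IsACCurve a b γ then
    ∫⁻ t in Ioc a b, (ENNReal.ofReal (‖h.choose t‖ ^ 2) + gradNorm lam f (γ t) ^ 2)
  else ⊤

/-- `Θ_{f,x₀,x₁}`: the action on `[0,1]` with endpoint constraints. -/
def Theta (lam : ℝ) (f : H → EReal) (x0 x1 : H) (γ : ℝ → H) : ℝ≥0∞ :=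
  if γ 0 = x0 ∧ γ 1 = x1 then actionFn lam f 0 1 γ else ⊤

/-- `Γ_δ(x₀,x_δ)`: infimum of the action over curves joining the endpoints. -/
def GammaInf (lam : ℝ) (f : H → EReal) (δ : ℝ) (x0 xδ : H) : ℝ≥0∞ :=
  ⨅ (γ : ℝ → H) (_ : γ 0 = x0 ∧ γ δ = xδ), actionFn lam f 0 δ γ

/-- Mosco convergence of `fh` to `f`: recovery sequences for the strong topology, and the
`liminf` inequality along weakly convergent sequences. -/
def Mosco (fh : ℕ → H → EReal) (f : H → EReal) : Prop :=
  (∀ x : H, ∃ xh : ℕ → H, Tendsto xh atTop (𝓝 x) ∧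
      Filter.limsup (fun h => fh h (xh h)) atTop ≤ f x) ∧
  (∀ (xh : ℕ → H) (x : H),
      (∀ p : H, Tendsto (fun h => ⟪xh h, p⟫) atTop (𝓝 ⟪x, p⟫)) →
      f x ≤ Filter.liminf (fun h => fh h (xh h)) atTop)

/-! At a time `r` where `|∇f|(γ r)` is finite, a subgradient `p` at `γ r` bounds `f (γ r)` by
`f (γ u) + ‖p‖ ‖γ r - γ u‖ + |λ|/2 ‖γ r - γ u‖²`; Cauchy–Schwarz and AM–GM turn this into
`f (γ u) + ½ ((r - u) |∇f|²(γ r) + ∫ᵤʳ ‖γ̇‖²)` up to an error `O((r - u) ∫ᵤʳ ‖γ̇‖²)`.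
Stepping each time to a nearby `r` where `|∇f|²` is almost below its average on `(u, r]`,
and closing the continuous induction with the lower semicontinuity of `f ∘ γ`, gives
`f (γ t) ≤ f (γ s) + ½ ∫ (‖γ̇‖² + |∇f|²(γ))` between any two times, in either direction.
Since `|∇f|(γ t)` is finite for some `t`, `f ∘ γ` is finite there, hence at both endpoints. -/

open scoped Interval

theorem LowerSemicontinuousOn.le_of_forall_exists_gt {α β : Type*}
    [ConditionallyCompleteLinearOrder α] [TopologicalSpace α] [OrderTopology α] [LinearOrder β]
    {a b : α} {φ B : α → β} (hφ : LowerSemicontinuousOn φ (Icc a b))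
    (hB : MonotoneOn B (Icc a b)) (hab : a ≤ b) (ha : φ a ≤ B a)
    (hstep : ∀ u ∈ Ico a b, φ u ≤ B u → ∃ r ∈ Ioc u b, φ r ≤ B r) :
    φ b ≤ B b := by
  set S := {r ∈ Icc a b | φ r ≤ B r}
  have hSbdd : BddAbove S := ⟨b, fun r hr => hr.1.2⟩
  have haS : a ∈ S := ⟨left_mem_Icc.2 hab, ha⟩
  have hu : sSup S ∈ Icc a b := ⟨le_csSup hSbdd haS, csSup_le ⟨a, haS⟩ fun r hr => hr.1.2⟩
  have huS : sSup S ∈ S := by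
    refine ⟨hu, not_lt.1 fun hlt => ?_⟩
    have : (𝓝[S] sSup S).NeBot :=
      mem_closure_iff_nhdsWithin_neBot.1 (csSup_mem_closure ⟨a, haS⟩ hSbdd)
    have hev : ∀ᶠ r in 𝓝[S] sSup S, B (sSup S) < φ r :=
      nhdsWithin_mono _ (sep_subset _ _) (hφ _ hu _ hlt)
    obtain ⟨r, hBr, hrS⟩ := (hev.and self_mem_nhdsWithin).exists
    exact hBr.not_ge (hrS.2.trans (hB hrS.1 hu (le_csSup hSbdd hrS)))
  obtain hub | hlt := hu.2.eq_or_lt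
  · exact hub ▸ huS.2
  obtain ⟨r, hr, hrB⟩ := hstep _ ⟨hu.1, hlt⟩ huS.2
  exact absurd (le_csSup hSbdd ⟨⟨hu.1.trans hr.1.le, hr.2⟩, hrB⟩) hr.1.not_ge

theorem setLIntegral_Ioc_comp_neg (F : ℝ → ℝ≥0∞) (a b : ℝ) :
    ∫⁻ x in Ioc a b, F (-x) = ∫⁻ x in Ioc (-b) (-a), F x := by
  have := (Measure.measurePreserving_neg (volume : Measure ℝ)).setLIntegral_comp_preimage_emb
    measurableEmbedding_neg F (Ico (-b) (-a))
  rw [Set.neg_preimage, neg_Ico, neg_neg, neg_neg] at this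
  rw [this]
  exact setLIntegral_congr Ico_ae_eq_Ioc

theorem setLIntegral_Ioc_ne_top_of_le {F : ℝ → ℝ≥0∞} {a b u r : ℝ}
    (hF : ∫⁻ x in Ioc a b, F x ≠ ⊤) (hu : a ≤ u) (hr : r ≤ b) : ∫⁻ x in Ioc u r, F x ≠ ⊤ :=
  ne_top_of_le_ne_top hF (lintegral_mono_set (Ioc_subset_Ioc hu hr))

theorem toReal_setLIntegral_Ioc_add_Ioc {F : ℝ → ℝ≥0∞} {a u r : ℝ} (hau : a ≤ u) (hur : u ≤ r)
    (hF : ∫⁻ x in Ioc a r, F x ≠ ⊤) :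
    (∫⁻ x in Ioc a u, F x).toReal + (∫⁻ x in Ioc u r, F x).toReal
      = (∫⁻ x in Ioc a r, F x).toReal := by
  rw [← Ioc_union_Ioc_eq_Ioc hau hur, lintegral_union measurableSet_Ioc
    (Ioc_disjoint_Ioc_of_le le_rfl)] at hF ⊢
  exact (ENNReal.toReal_add (ENNReal.add_ne_top.1 hF).1 (ENNReal.add_ne_top.1 hF).2).symm

theorem exists_ne_top_of_setLIntegral_ne_top {α : Type*} [MeasurableSpace α] {μ : Measure α}
    {F : α → ℝ≥0∞} {s : Set α} (hs : MeasurableSet s) (hμ : μ s ≠ 0)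
    (hF : ∫⁻ x in s, F x ∂μ ≠ ⊤) : ∃ x ∈ s, F x ≠ ⊤ := by
  by_contra! h
  rw [setLIntegral_congr_fun hs h, setLIntegral_const, ENNReal.top_mul hμ] at hF
  exact hF rfl

theorem exists_mul_toReal_le_setLIntegral_Ioc {G : ℝ → ℝ≥0∞} {u v ε : ℝ} (huv : u < v)
    (hε : 0 < ε) (hG : ∫⁻ x in Ioc u v, G x ≠ ⊤) :
    ∃ r ∈ Ioo u v, G r ≠ ⊤ ∧
      (r - u) * (G r).toReal ≤ (∫⁻ x in Ioc u r, G x).toReal + ε * (r - u) := by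
  set m := ⨅ x ∈ Ioo u v, G x with hm_def
  have hm : m ≠ ⊤ := by
    obtain ⟨x, hx, hGx⟩ := exists_ne_top_of_setLIntegral_ne_top measurableSet_Ioo
      (by simpa using huv) (ne_top_of_le_ne_top hG (lintegral_mono_set Ioo_subset_Ioc_self))
    exact ne_top_of_le_ne_top hGx (iInf₂_le x hx)
  obtain ⟨r, hr, hGr⟩ : ∃ r ∈ Ioo u v, G r < m + ENNReal.ofReal ε := by
    have h := ENNReal.lt_add_right hm (ENNReal.ofReal_pos.2 hε).ne'
    nth_rewrite 1 [hm_def] at h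
    simpa only [iInf_lt_iff, exists_prop] using h
  have hmr : m * ENNReal.ofReal (r - u) ≤ ∫⁻ x in Ioc u r, G x := by
    rw [← Real.volume_Ioc, ← setLIntegral_const]
    exact setLIntegral_mono' measurableSet_Ioc fun x hx => iInf₂_le x ⟨hx.1, hx.2.trans_lt hr.2⟩
  have hGr' : (G r).toReal ≤ m.toReal + ε := by
    simpa [ENNReal.toReal_add hm, hε.le] using ENNReal.toReal_mono (by finiteness) hGr.le
  have hmr' : m.toReal * (r - u) ≤ (∫⁻ x in Ioc u r, G x).toReal := by
    simpa [ENNReal.toReal_mul, sub_nonneg.2 hr.1.le] using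
      ENNReal.toReal_mono (setLIntegral_Ioc_ne_top_of_le hG le_rfl hr.2.le) hmr
  refine ⟨r, hr, (hGr.trans_le le_top).ne, ?_⟩
  nlinarith [sub_pos.2 hr.1]

section ChainEstimate

variable {a b c : ℝ} {φ : ℝ → EReal} {G K : ℝ → ℝ≥0∞}

theorem le_add_half_setLIntegral_Ioc (hφ : LowerSemicontinuousOn φ (Icc a b)) (hc : 0 ≤ c)
    (hG : ∫⁻ x in Ioc a b, G x ≠ ⊤) (hK : ∫⁻ x in Ioc a b, K x ≠ ⊤)
    (hstep : ∀ u r, a ≤ u → u < r → r ≤ b → G r ≠ ⊤ → φ r ≤ φ u +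
      (((r - u) * (G r).toReal + (1 + c * (r - u)) * (∫⁻ x in Ioc u r, K x).toReal) / 2 : ℝ))
    (hab : a ≤ b) {α : ℝ} (hα : φ a ≤ α) :
    φ b ≤ (α + ((∫⁻ x in Ioc a b, G x).toReal + (∫⁻ x in Ioc a b, K x).toReal) / 2 : ℝ) := by
  set L := fun r => (∫⁻ x in Ioc a r, G x).toReal
  set A := fun r => (∫⁻ x in Ioc a r, K x).toReal
  have hadd : ∀ {F : ℝ → ℝ≥0∞}, ∫⁻ x in Ioc a b, F x ≠ ⊤ → ∀ {u r}, a ≤ u → u ≤ r → r ≤ b →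
      (∫⁻ x in Ioc a u, F x).toReal + (∫⁻ x in Ioc u r, F x).toReal
        = (∫⁻ x in Ioc a r, F x).toReal := fun hF _ _ hu hur hr =>
    toReal_setLIntegral_Ioc_add_Ioc hu hur (setLIntegral_Ioc_ne_top_of_le hF le_rfl hr)
  -- steps of length `≤ ε` keep `φ` below the budget `B`; its extra terms vanish as `ε → 0`
  have key : ∀ ε > 0, φ b ≤ (α + (L b + (1 + c * ε) * A b + ε * (b - a)) / 2 : ℝ) := by
    intro ε hε
    refine hφ.le_of_forall_exists_gt (B := fun r => ((α + (L r + (1 + c * ε) * A r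
      + ε * (r - a)) / 2 : ℝ) : EReal)) ?_ hab (by simpa [L, A] using hα) ?_
    · intro u hu r hr hur
      have hL : L u + _ = L r := hadd hG hu.1 hur hr.2
      have hA : A u + _ = A r := hadd hK hu.1 hur hr.2
      rw [EReal.coe_le_coe_iff, ← hL, ← hA]
      nlinarith [ENNReal.toReal_nonneg (a := ∫⁻ x in Ioc u r, G x),
        ENNReal.toReal_nonneg (a := ∫⁻ x in Ioc u r, K x), mul_nonneg hc hε.le]
    · intro u hu hφu
      obtain ⟨r, hr, hGr, hGr_le⟩ := exists_mul_toReal_le_setLIntegral_Ioc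
        (lt_min (by linarith [hu.2]) hu.2 : u < min (u + ε) b) hε
        (setLIntegral_Ioc_ne_top_of_le hG hu.1 (min_le_right _ _))
      have hrb : r ≤ b := hr.2.le.trans (min_le_right _ _)
      have hrε : r - u ≤ ε := by linarith [hr.2.trans_le (min_le_left _ _)]
      refine ⟨r, ⟨hr.1, hrb⟩, (hstep u r hu.1 hr.1 hrb hGr).trans
        ((add_le_add_left hφu _).trans ?_)⟩
      have hL : L u + _ = L r := hadd hG hu.1 hr.1.le hrb
      have hA : A u + _ = A r := hadd hK hu.1 hr.1.le hrb
      rw [← EReal.coe_add, EReal.coe_le_coe_iff, ← hL, ← hA]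
      nlinarith [mul_le_mul_of_nonneg_left hrε
        (mul_nonneg hc (ENNReal.toReal_nonneg (a := ∫⁻ x in Ioc u r, K x)))]
  have hlim : Tendsto (fun ε : ℝ => ((α + (L b + (1 + c * ε) * A b + ε * (b - a)) / 2 : ℝ) : EReal))
      (𝓝[>] 0) (𝓝 ((α + (L b + A b) / 2 : ℝ) : EReal)) := by
    refine ((continuous_coe_real_ereal.comp (by fun_prop)).tendsto' 0 _ ?_).mono_left
      nhdsWithin_le_nhds
    simp
  exact ge_of_tendsto hlim (eventually_nhdsWithin_of_forall key)

theorem le_add_half_setLIntegral_uIoc (hφ : LowerSemicontinuousOn φ (Icc a b)) (hc : 0 ≤ c)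
    (hG : ∫⁻ x in Ioc a b, G x ≠ ⊤) (hK : ∫⁻ x in Ioc a b, K x ≠ ⊤)
    (hstep : ∀ u ∈ Icc a b, ∀ r ∈ Icc a b, G r ≠ ⊤ → φ r ≤ φ u +
      ((|r - u| * (G r).toReal + (1 + c * |r - u|) * (∫⁻ x in Ι u r, K x).toReal) / 2 : ℝ))
    {s t : ℝ} (hs : s ∈ Icc a b) (ht : t ∈ Icc a b) {α : ℝ} (hα : φ s ≤ α) :
    φ t ≤ (α + ((∫⁻ x in Ι s t, G x).toReal + (∫⁻ x in Ι s t, K x).toReal) / 2 : ℝ) := by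
  rcases le_total s t with hst | hts
  · rw [uIoc_of_le hst]
    refine le_add_half_setLIntegral_Ioc (hφ.mono (Icc_subset_Icc hs.1 ht.2)) hc
      (setLIntegral_Ioc_ne_top_of_le hG hs.1 ht.2) (setLIntegral_Ioc_ne_top_of_le hK hs.1 ht.2)
      (fun u r hu hur hr hGr => ?_) hst hα
    have := hstep u ⟨hs.1.trans hu, hur.le.trans (hr.trans ht.2)⟩
      r ⟨hs.1.trans (hu.trans hur.le), hr.trans ht.2⟩ hGr
    rwa [abs_of_pos (sub_pos.2 hur), uIoc_of_le hur.le] at this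
  · rw [uIoc_of_ge hts]
    have := le_add_half_setLIntegral_Ioc (φ := φ ∘ Neg.neg) (G := G ∘ Neg.neg)
      (K := K ∘ Neg.neg) (a := -s) (b := -t) (α := α)
      (hφ.comp continuousOn_neg fun x hx => ⟨by linarith [hx.2, ht.1], by linarith [hx.1, hs.2]⟩)
      hc ?_ ?_ (fun u r hu hur hr hGr => ?_) (neg_le_neg hts) (by simpa using hα)
    · simpa [setLIntegral_Ioc_comp_neg] using this
    · simpa [setLIntegral_Ioc_comp_neg] using setLIntegral_Ioc_ne_top_of_le hG ht.1 hs.2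
    · simpa [setLIntegral_Ioc_comp_neg] using setLIntegral_Ioc_ne_top_of_le hK ht.1 hs.2
    · have := hstep (-u) ⟨by linarith [ht.1], by linarith [hs.2]⟩
        (-r) ⟨by linarith [ht.1], by linarith [hs.2]⟩ hGr
      rwa [show |-r - -u| = r - u by rw [abs_of_neg (by linarith)]; ring,
        uIoc_of_ge (neg_le_neg hur.le), ← setLIntegral_Ioc_comp_neg] at this

end ChainEstimate

theorem sq_setIntegral_le_measureReal_mul {α : Type*} [MeasurableSpace α] {μ : Measure α}
    {s : Set α} {h : α → ℝ} (hs : μ s ≠ ⊤) (hh : IntegrableOn h s μ)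
    (hh2 : IntegrableOn (fun x => h x ^ 2) s μ) :
    (∫ x in s, h x ∂μ) ^ 2 ≤ μ.real s * ∫ x in s, h x ^ 2 ∂μ := by
  rcases eq_or_ne (μ s) 0 with h0 | h0
  · simp [Measure.restrict_eq_zero.2 h0]
  have hw : 0 < μ.real s := ENNReal.toReal_pos h0 hs
  have jensen := (even_two.convexOn_pow (𝕜 := ℝ)).map_set_average_le
    (continuous_pow 2).continuousOn isClosed_univ h0 hs (ae_of_all _ fun _ => mem_univ _) hh hh2
  simp only [setAverage_eq, smul_eq_mul, mul_pow] at jensen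
  calc (∫ x in s, h x ∂μ) ^ 2 = μ.real s ^ 2 * ((μ.real s)⁻¹ ^ 2 * (∫ x in s, h x ∂μ) ^ 2) := by
        field_simp
    _ ≤ μ.real s ^ 2 * ((μ.real s)⁻¹ * ∫ x in s, h x ^ 2 ∂μ) := by gcongr
    _ = _ := by field_simp

section Curve

variable {F : Type*} [NormedAddCommGroup F] [NormedSpace ℝ F] {a b : ℝ} {γ g : ℝ → F}

theorem sub_eq_intervalIntegral_of_eq_add_integral (hg : IntegrableOn g (Icc a b))
    (hγ : ∀ t ∈ Icc a b, γ t = γ a + ∫ s in a..t, g s) {u r : ℝ} (hu : u ∈ Icc a b)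
    (hr : r ∈ Icc a b) : γ r - γ u = ∫ s in u..r, g s := by
  have hint : ∀ {t}, t ∈ Icc a b → IntervalIntegrable g volume a t := fun ht =>
    (hg.mono_set (uIcc_subset_Icc (left_mem_Icc.2 (ht.1.trans ht.2)) ht)).intervalIntegrable
  rw [hγ r hr, hγ u hu, add_sub_add_left_eq_sub,
    intervalIntegral.integral_interval_sub_left (hint hr) (hint hu)]

theorem continuousOn_of_eq_add_integral (hg : IntegrableOn g (Icc a b))
    (hγ : ∀ t ∈ Icc a b, γ t = γ a + ∫ s in a..t, g s) : ContinuousOn γ (Icc a b) := by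
  have : ContinuousOn (fun t => γ a + ∫ s in Ioc a t, g s) (Icc a b) :=
    continuousOn_const.add (intervalIntegral.continuousOn_primitive hg)
  exact this.congr fun t ht => by rw [hγ t ht, intervalIntegral.integral_of_le ht.1]

theorem norm_sub_sq_le_of_eq_add_integral (hg : IntegrableOn g (Icc a b))
    (hγ : ∀ t ∈ Icc a b, γ t = γ a + ∫ s in a..t, g s)
    (hg2 : IntegrableOn (fun t => ‖g t‖ ^ 2) (Ioc a b)) {u r : ℝ} (hu : u ∈ Icc a b)
    (hr : r ∈ Icc a b) : ‖γ r - γ u‖ ^ 2 ≤ |r - u| * ∫ s in Ι u r, ‖g s‖ ^ 2 := by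
  have hsub : Ι u r ⊆ Ioc a b := Ioc_subset_Ioc (le_min hu.1 hr.1) (max_le hu.2 hr.2)
  rw [sub_eq_intervalIntegral_of_eq_add_integral hg hγ hu hr]
  calc ‖∫ s in u..r, g s‖ ^ 2 ≤ (∫ s in Ι u r, ‖g s‖) ^ 2 := by
        gcongr; exact intervalIntegral.norm_integral_le_integral_norm_uIoc
    _ ≤ |r - u| * ∫ s in Ι u r, ‖g s‖ ^ 2 := by
        simpa [Measure.real, Real.volume_uIoc] using sq_setIntegral_le_measureReal_mul
          (by simp [Real.volume_uIoc])
          (IntegrableOn.mono_set hg.norm (hsub.trans Ioc_subset_Icc_self))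
          (hg2.mono_set hsub)

end Curve

section Subdifferential

variable {E : Type*} [NormedAddCommGroup E] [InnerProductSpace ℝ E] {lam : ℝ} {f : E → EReal}

theorem le_add_of_mem_subdiff {x y p : E} (hp : p ∈ subdiff lam f y) :
    f y ≤ f x + ((‖p‖ * ‖y - x‖ + |lam| / 2 * ‖y - x‖ ^ 2 : ℝ) : EReal) := by
  set c : ℝ := ⟪p, x - y⟫ + lam / 2 * ‖x - y‖ ^ 2
  have hc : -c ≤ ‖p‖ * ‖y - x‖ + |lam| / 2 * ‖y - x‖ ^ 2 := by
    have := neg_le_of_abs_le (abs_real_inner_le_norm p (x - y))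
    simp only [c, norm_sub_rev x y] at this ⊢
    nlinarith [neg_abs_le lam, sq_nonneg ‖y - x‖]
  calc f y = f y + (c : EReal) + ((-c : ℝ) : EReal) := by
        rw [add_assoc, ← EReal.coe_add, add_neg_cancel, EReal.coe_zero, add_zero]
    _ ≤ f x + ((-c : ℝ) : EReal) := add_le_add_left (hp.2 x) _
    _ ≤ _ := add_le_add_right (EReal.coe_le_coe_iff.2 hc) _

theorem convex_subdiff (x : E) : Convex ℝ (subdiff lam f x) := by
  intro p hp q hq a b ha hb hab
  refine ⟨hp.1, fun y => le_trans ?_ (max_le (hp.2 y) (hq.2 y))⟩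
  have hmono : Monotone fun s : ℝ => f x + (s : EReal) := fun s t hst =>
    add_le_add_right (EReal.coe_le_coe_iff.2 hst) _
  rw [← hmono.map_max]
  refine hmono ?_
  set P := ⟪p, y - x⟫ + lam / 2 * ‖y - x‖ ^ 2
  set Q := ⟪q, y - x⟫ + lam / 2 * ‖y - x‖ ^ 2
  calc ⟪a • p + b • q, y - x⟫ + lam / 2 * ‖y - x‖ ^ 2 = a • P + b • Q := by
        rw [inner_add_left, real_inner_smul_left, real_inner_smul_left, smul_eq_mul, smul_eq_mul]
        linear_combination -(lam / 2 * ‖y - x‖ ^ 2) * hab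
    _ ≤ max P Q := Convex.combo_le_max P Q ha hb hab

theorem isClosed_subdiff {x : E} (hx : f x ≠ ⊥) : IsClosed (subdiff lam f x) := by
  by_cases hxt : f x = ⊤
  · simp [subdiff, hxt]
  obtain ⟨a, ha⟩ : ∃ a : ℝ, f x = a := ⟨_, (EReal.coe_toReal hxt hx).symm⟩
  have : subdiff lam f x =
      ⋂ y, {p | ((a + (⟪p, y - x⟫ + lam / 2 * ‖y - x‖ ^ 2) : ℝ) : EReal) ≤ f y} := by
    ext p
    simp [subdiff, ha]
  rw [this]
  exact isClosed_iInter fun y =>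
    isClosed_le (continuous_coe_real_ereal.comp (by fun_prop)) continuous_const

theorem exists_mem_subdiff_gradNorm_eq [CompleteSpace E] {x : E} (hx : f x ≠ ⊥)
    (h : gradNorm lam f x ≠ ⊤) :
    ∃ p ∈ subdiff lam f x, gradNorm lam f x = ENNReal.ofReal ‖p‖ := by
  have hne : (subdiff lam f x).Nonempty := by
    by_contra hemp
    exact h (by simp [gradNorm, hemp])
  have hmin : ∃ p ∈ subdiff lam f x, ∀ q ∈ subdiff lam f x, ‖p‖ ≤ ‖q‖ := by
    obtain ⟨p, hp, hpmin⟩ := exists_norm_eq_iInf_of_complete_convex hne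
      (isClosed_subdiff hx).isComplete (convex_subdiff x) 0
    refine ⟨p, hp, fun q hq => ?_⟩
    calc ‖p‖ = ⨅ w : subdiff lam f x, ‖0 - (w : E)‖ := by simpa using hpmin
      _ ≤ ‖0 - q‖ := ciInf_le (f := fun w : subdiff lam f x => ‖0 - (w : E)‖)
          ⟨0, by rintro _ ⟨w, rfl⟩; positivity⟩ ⟨q, hq⟩
      _ = ‖q‖ := by simp
  refine ⟨gradMin lam f x, ?_, by rw [gradNorm, if_pos hne]⟩
  rw [gradMin, dif_pos hmin]
  exact hmin.choose_spec.1

end Subdifferential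

section Action

variable {E : Type*} [NormedAddCommGroup E] [InnerProductSpace ℝ E] {lam a b : ℝ}
  {f : E → EReal} {γ g : ℝ → E}

theorem le_add_of_gradNorm_ne_top [CompleteSpace E] (hbot : ∀ x, f x ≠ ⊥)
    (hg : IntegrableOn g (Icc a b)) (hγ : ∀ t ∈ Icc a b, γ t = γ a + ∫ s in a..t, g s)
    (hg2 : IntegrableOn (fun t => ‖g t‖ ^ 2) (Ioc a b)) {u r : ℝ} (hu : u ∈ Icc a b)
    (hr : r ∈ Icc a b) (hGr : gradNorm lam f (γ r) ^ 2 ≠ ⊤) :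
    f (γ r) ≤ f (γ u) + ((|r - u| * (gradNorm lam f (γ r) ^ 2).toReal + (1 + |lam| * |r - u|)
      * (∫⁻ t in Ι u r, ENNReal.ofReal (‖g t‖ ^ 2)).toReal) / 2 : ℝ) := by
  obtain ⟨p, hp, hpG⟩ := exists_mem_subdiff_gradNorm_eq (hbot _)
    ((ENNReal.pow_ne_top_iff.1 hGr).resolve_right two_ne_zero)
  have hsub : Ι u r ⊆ Ioc a b := Ioc_subset_Ioc (le_min hu.1 hr.1) (max_le hu.2 hr.2)
  have hd := norm_sub_sq_le_of_eq_add_integral hg hγ hg2 hu hr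
  rw [hpG, ← ENNReal.ofReal_pow (norm_nonneg _), ENNReal.toReal_ofReal (by positivity),
    ← integral_eq_lintegral_of_nonneg_ae (ae_of_all _ fun _ => by positivity)
      (hg2.mono_set hsub).aestronglyMeasurable]
  refine (le_add_of_mem_subdiff hp).trans (add_le_add_right (EReal.coe_le_coe_iff.2 ?_) _)
  set d := ‖γ r - γ u‖
  set w := |r - u|
  set A := ∫ s in Ι u r, ‖g s‖ ^ 2
  have hA : 0 ≤ A := setIntegral_nonneg measurableSet_uIoc fun _ _ => by positivity
  have hpd : 2 * ‖p‖ * d ≤ w * ‖p‖ ^ 2 + A := by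
    refine (pow_le_pow_iff_left₀ (by positivity) (by positivity) two_ne_zero).1 ?_
    nlinarith [sq_nonneg (w * ‖p‖ ^ 2 - A), mul_le_mul_of_nonneg_left hd (sq_nonneg ‖p‖)]
  nlinarith [mul_le_mul_of_nonneg_left hd (abs_nonneg lam)]

theorem ne_top_and_toReal_le_add_half_setLIntegral [CompleteSpace E] (hbot : ∀ x, f x ≠ ⊥)
    (hlsc : LowerSemicontinuous f) (hg : IntegrableOn g (Icc a b))
    (hγ : ∀ t ∈ Icc a b, γ t = γ a + ∫ s in a..t, g s)
    (hg2 : IntegrableOn (fun t => ‖g t‖ ^ 2) (Ioc a b))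
    (hG : ∫⁻ t in Ioc a b, gradNorm lam f (γ t) ^ 2 ≠ ⊤) {s t : ℝ} (hs : s ∈ Icc a b)
    (ht : t ∈ Icc a b) (hfs : f (γ s) ≠ ⊤) :
    f (γ t) ≠ ⊤ ∧ (f (γ t)).toReal ≤ (f (γ s)).toReal
      + ((∫⁻ x in Ι s t, gradNorm lam f (γ x) ^ 2).toReal
        + (∫⁻ x in Ι s t, ENNReal.ofReal (‖g x‖ ^ 2)).toReal) / 2 := by
  have hK := ((hasFiniteIntegral_iff_ofReal (ae_of_all _ fun _ => by positivity)).1 hg2.2).ne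
  have hle := le_add_half_setLIntegral_uIoc (φ := fun t => f (γ t))
    ((hlsc.lowerSemicontinuousOn univ).comp (continuousOn_of_eq_add_integral hg hγ)
      (mapsTo_univ _ _)) (abs_nonneg lam) hG hK
    (fun u hu r hr => le_add_of_gradNorm_ne_top hbot hg hγ hg2 hu hr) hs ht
    (EReal.le_coe_toReal hfs)
  exact ⟨ne_top_of_le_ne_top (EReal.coe_ne_top _) hle,
    by simpa only [EReal.toReal_coe] using EReal.toReal_le_toReal hle (hbot _) (EReal.coe_ne_top _)⟩

theorem actionFn_eq_add (hAC : IsACCurve a b γ) :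
    actionFn lam f a b γ = (∫⁻ t in Ioc a b, ENNReal.ofReal (‖hAC.choose t‖ ^ 2))
      + ∫⁻ t in Ioc a b, gradNorm lam f (γ t) ^ 2 := by
  rw [actionFn, dif_pos hAC]
  exact lintegral_add_left' ((hAC.choose_spec.1.mono_set Ioc_subset_Icc_self)
    |>.aestronglyMeasurable.norm.aemeasurable.pow_const 2).ennreal_ofReal _

end Action

theorem statement14_general (lam : ℝ) (f : H → EReal)
    (hf : ProperFn f) (hlsc : LowerSemicontinuous f)
    (δ : ℝ) (hδ : 0 < δ) (γ : ℝ → H) (hAC : IsACCurve 0 δ γ)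
    (hfin : actionFn lam f 0 δ γ ≠ ⊤) :
    f (γ 0) ≠ ⊤ ∧ f (γ δ) ≠ ⊤ ∧
      ENNReal.ofReal (2 * |(f (γ δ)).toReal - (f (γ 0)).toReal|) ≤ actionFn lam f 0 δ γ := by
  obtain ⟨hg, hγ⟩ := hAC.choose_spec
  rw [actionFn_eq_add hAC] at hfin ⊢
  obtain ⟨hK, hG⟩ := ENNReal.add_ne_top.1 hfin
  have hg2 : IntegrableOn (fun t => ‖hAC.choose t‖ ^ 2) (Ioc 0 δ) :=
    ⟨(hg.mono_set Ioc_subset_Icc_self).aestronglyMeasurable.norm.pow 2,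
      (hasFiniteIntegral_iff_ofReal (ae_of_all _ fun _ => by positivity)).2 hK.lt_top⟩
  have chain := fun {s t : ℝ} (hs : s ∈ Icc 0 δ) (ht : t ∈ Icc 0 δ) =>
    ne_top_and_toReal_le_add_half_setLIntegral hf.2 hlsc hg hγ hg2 hG hs ht
  have h0 : 0 ∈ Icc 0 δ := left_mem_Icc.2 hδ.le
  have hδ' : δ ∈ Icc 0 δ := right_mem_Icc.2 hδ.le
  obtain ⟨t, ht, hGt⟩ :=
    exists_ne_top_of_setLIntegral_ne_top measurableSet_Ioc (by simpa using hδ) hG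
  obtain ⟨p, hp, -⟩ := exists_mem_subdiff_gradNorm_eq (hf.2 _)
    ((ENNReal.pow_ne_top_iff.1 hGt).resolve_right two_ne_zero)
  have hf0 := (chain (Ioc_subset_Icc_self ht) h0 hp.1).1
  obtain ⟨hfδ, hup⟩ := chain h0 hδ' hf0
  have hdown := (chain hδ' h0 hfδ).2
  rw [uIoc_of_le hδ.le] at hup
  rw [uIoc_of_ge hδ.le] at hdown
  refine ⟨hf0, hfδ, ?_⟩
  rw [ENNReal.ofReal_le_iff_le_toReal hfin, ENNReal.toReal_add hK hG]
  linarith [abs_sub_le_iff.2 ⟨sub_le_iff_le_add'.2 hup, sub_le_iff_le_add'.2 hdown⟩]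

/-- finiteness of `f` at the endpoints and `2|f(γ(δ)) - f(γ(0))| ≤ I_f^δ(γ)`. -/
theorem statement14 (lam : ℝ) (f : H → EReal)
    (hf : ProperFn f) (hconv : LambdaConvex lam f) (hlsc : LowerSemicontinuous f)
    (δ : ℝ) (hδ : 0 < δ) (γ : ℝ → H) (hAC : IsACCurve 0 δ γ)
    (hfin : actionFn lam f 0 δ γ ≠ ⊤) :
    f (γ 0) ≠ ⊤ ∧ f (γ δ) ≠ ⊤ ∧
      ENNReal.ofReal (2 * |(f (γ δ)).toReal - (f (γ 0)).toReal|) ≤ actionFn lam f 0 δ γ :=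
  statement14_general lam f hf hlsc δ hδ γ hAC hfin
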